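/- arXiv:2509.25451 — 4 statements merged into one kernel-verified Lean document; each statement's English description precedes it below -/
import Mathlib

section
/- Define g_p^tr(A) = tr(A^p) on the Euclidean space of n×n complex Hermitian matrices with the Hilbert–Schmidt inner product. Then the Laplacian satisfies Δ g_p^tr(A) = p · Σ_{k=0}^{p−2} tr(A^k)·tr(A^{p−2−k}) for every p ≥ 2 and every Hermitian matrix A. -/
/-!
Differentiating the noncommutative power twice and using cyclicity of the trace once, the second
derivative of `s ↦ tr((A + sH)^p)` at `0` is `p Σ_k tr(A^(p-2-k) H A^k H)`.
An orthonormal basis `(H i)` of the Hermitian matrices also spans all complex matrices over `ℂ`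
(write `M = ℜ M + i ℑ M`), so it satisfies the completeness relation `Σ_i tr(H_i M) H_i = M`.
Taking `M = E_ba` gives `Σ_i (H_i)_ab H_i = E_ba`, whence `Σ_i H_i Y H_i = tr(Y) 1` and
`Σ_i tr(X H_i Y H_i) = tr X tr Y`; summing the second derivatives over `i` gives the formula.
-/

open Matrix ComplexStarModule

section Derivative

attribute [local instance] Matrix.frobeniusNormedAddCommGroup Matrix.frobeniusNormedRing
  Matrix.frobeniusNormedSpace Matrix.frobeniusNormedAlgebra

variable {m : Type*} [Fintype m] [DecidableEq m]

noncomputable def Matrix.traceCLM : Matrix m m ℂ →L[ℝ] ℂ :=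
  LinearMap.toContinuousLinearMap ((traceLinearMap m ℂ ℂ).restrictScalars ℝ)

lemma hasDerivAt_trace_add_smul_pow_mul (A H B : Matrix m m ℂ) (k : ℕ) (s : ℝ) :
    HasDerivAt (fun t : ℝ => ((A + t • H) ^ k * B).trace)
      (∑ i ∈ Finset.range k, ((A + s • H) ^ (k - 1 - i) * H * (A + s • H) ^ i * B).trace) s := by
  have hline : HasDerivAt (fun t : ℝ => A + t • H) H s :=
    (((hasDerivAt_id' s).smul_const H).const_add A).congr_deriv (one_smul ℝ H)
  have hpow := (hline.fun_pow' k).mul_const B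
  refine (traceCLM.hasFDerivAt.comp_hasDerivAt s hpow).congr_deriv ?_
  rw [Finset.sum_mul, Nat.pred_eq_sub_one]
  exact trace_sum _ _

lemma hasDerivAt_trace_add_smul_pow (A H : Matrix m m ℂ) (k : ℕ) (s : ℝ) :
    HasDerivAt (fun t : ℝ => ((A + t • H) ^ k).trace)
      (k * ((A + s • H) ^ (k - 1) * H).trace) s := by
  have hcycle : ∀ i ∈ Finset.range k,
      ((A + s • H) ^ (k - 1 - i) * H * (A + s • H) ^ i).trace
        = ((A + s • H) ^ (k - 1) * H).trace := by
    intro i hi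
    rw [trace_mul_comm, ← mul_assoc, ← pow_add, Nat.add_sub_cancel' (by grind)]
  have h := hasDerivAt_trace_add_smul_pow_mul A H 1 k s
  simp only [mul_one] at h
  rwa [Finset.sum_congr rfl hcycle, Finset.sum_const, Finset.card_range, nsmul_eq_mul] at h

lemma iteratedDeriv_two_trace_add_smul_pow (A H : Matrix m m ℂ) (p : ℕ) :
    iteratedDeriv 2 (fun s : ℝ => ((A + s • H) ^ p).trace) 0
      = p * ∑ i ∈ Finset.range (p - 1), (A ^ (p - 2 - i) * H * A ^ i * H).trace := by
  have hderiv : deriv (fun s : ℝ => ((A + s • H) ^ p).trace)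
      = fun s => p * ((A + s • H) ^ (p - 1) * H).trace :=
    funext fun s => (hasDerivAt_trace_add_smul_pow A H p s).deriv
  rw [iteratedDeriv_succ, iteratedDeriv_one, hderiv,
    ((hasDerivAt_trace_add_smul_pow_mul A H H (p - 1) 0).const_mul (p : ℂ)).deriv]
  simp [Nat.sub_sub]

end Derivative

lemma sum_trace_mul_smul_eq_self {m ι : Type*} [Fintype m] [DecidableEq m] [Fintype ι]
    [DecidableEq ι] {H : ι → Matrix m m ℂ}
    (horth : ∀ i j, (H i * H j).trace = if i = j then 1 else 0)
    (hspan : ∀ M : Matrix m m ℂ, M.IsHermitian → M ∈ Submodule.span ℝ (Set.range H))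
    (M : Matrix m m ℂ) :
    ∑ i, (H i * M).trace • H i = M := by
  have hspanned : ∀ N ∈ Submodule.span ℝ (Set.range H), ∑ i, (H i * N).trace • H i = N := by
    intro N hN
    induction hN using Submodule.span_induction with
    | mem x hx =>
      obtain ⟨j, rfl⟩ := hx
      simp [horth]
    | zero => simp
    | add x y _ _ hx hy => simp [mul_add, add_smul, Finset.sum_add_distrib, hx, hy]
    | smul r x _ hx => simp [mul_smul, ← Finset.smul_sum, Complex.coe_smul, hx]
  have hselfAdjoint (N : selfAdjoint (Matrix m m ℂ)) : ∑ i, (H i * N).trace • H i = N :=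
    hspanned N (hspan N (isHermitian_iff_isSelfAdjoint.mpr N.2))
  rw [← realPart_add_I_smul_imaginaryPart M]
  simp only [mul_add, mul_smul_comm, trace_add, trace_smul, add_smul, smul_assoc,
    Finset.sum_add_distrib, ← Finset.smul_sum, hselfAdjoint]

section Completeness

variable {m ι R : Type*} [Fintype m] [DecidableEq m] [Fintype ι] [CommRing R]
  {H : ι → Matrix m m R}

lemma sum_apply_smul_eq_single (hcomplete : ∀ M, ∑ i, (H i * M).trace • H i = M) (a b : m) :
    ∑ i, H i a b • H i = Matrix.single b a 1 := by
  simpa [trace_mul_single] using hcomplete (Matrix.single b a 1)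

lemma sum_mul_mul_eq_trace_smul_one (hcomplete : ∀ M, ∑ i, (H i * M).trace • H i = M)
    (Y : Matrix m m R) :
    ∑ i, H i * Y * H i = Y.trace • 1 := by
  ext a b
  calc (∑ i, H i * Y * H i) a b
      = ∑ i, ∑ c, H i a c * (Y * H i) c b := by
        simp only [Matrix.sum_apply, mul_assoc, mul_apply (M := H _) (N := Y * H _)]
    _ = ∑ c, (Y * ∑ i, H i a c • H i) c b := by
        rw [Finset.sum_comm]
        simp [Matrix.mul_sum, Matrix.sum_apply]
    _ = ∑ c, (Y * Matrix.single c a 1 : Matrix m m R) c b := by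
        simp only [sum_apply_smul_eq_single hcomplete]
    _ = (Y.trace • (1 : Matrix m m R)) a b := by
        by_cases hab : a = b
        · subst hab; simp [trace]
        · simp [hab, mul_single_apply_of_ne _ _ _ _ _ (Ne.symm hab)]

lemma sum_trace_mul_mul_mul (hcomplete : ∀ M, ∑ i, (H i * M).trace • H i = M)
    (X Y : Matrix m m R) :
    ∑ i, (X * H i * Y * H i).trace = X.trace * Y.trace := by
  calc ∑ i, (X * H i * Y * H i).trace = (X * ∑ i, H i * Y * H i).trace := by
        simp only [Matrix.mul_sum, trace_sum, mul_assoc]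
    _ = X.trace * Y.trace := by
        rw [sum_mul_mul_eq_trace_smul_one hcomplete, mul_smul_comm, mul_one, trace_smul,
          smul_eq_mul, mul_comm]

end Completeness

theorem laplacian_trace_pow_general (n p : ℕ) {ι : Type*} [Fintype ι] [DecidableEq ι]
    (H : ι → Matrix (Fin n) (Fin n) ℂ)
    (horth : ∀ i j, (H i * H j).trace = if i = j then 1 else 0)
    (hspan : ∀ M : Matrix (Fin n) (Fin n) ℂ, M.IsHermitian →
      M ∈ Submodule.span ℝ (Set.range H))
    (A : Matrix (Fin n) (Fin n) ℂ) :
    ∑ i, iteratedDeriv 2 (fun s : ℝ => ((A + s • H i) ^ p).trace) 0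
      = (p : ℂ) * ∑ k ∈ Finset.range (p - 1), (A ^ k).trace * (A ^ (p - 2 - k)).trace := by
  have hcomplete := sum_trace_mul_smul_eq_self horth hspan
  simp only [iteratedDeriv_two_trace_add_smul_pow, ← Finset.mul_sum]
  rw [Finset.sum_comm]
  simp only [sum_trace_mul_mul_mul hcomplete, mul_comm]

/-- The Laplacian of `A ↦ tr(A^p)` on the Euclidean space of `n × n` Hermitian matrices:
for any orthonormal basis `(H i)` of the real vector space of Hermitian matrices (with
inner product `⟨A,B⟩ = tr(AB)`), the sum of second derivatives along basis directions
satisfies `Δ tr(A^p) = p Σ_{k=0}^{p-2} tr(A^k) tr(A^{p-2-k})` for `p ≥ 2`. -/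
theorem laplacian_trace_pow (n p : ℕ) (hp : 2 ≤ p) {ι : Type*} [Fintype ι] [DecidableEq ι]
    (H : ι → Matrix (Fin n) (Fin n) ℂ)
    (hherm : ∀ i, (H i).IsHermitian)
    (horth : ∀ i j, (H i * H j).trace = if i = j then 1 else 0)
    (hspan : ∀ M : Matrix (Fin n) (Fin n) ℂ, M.IsHermitian →
      M ∈ Submodule.span ℝ (Set.range H))
    (A : Matrix (Fin n) (Fin n) ℂ) (hA : A.IsHermitian) :
    ∑ i, iteratedDeriv 2 (fun s : ℝ => ((A + s • H i) ^ p).trace) 0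
      = (p : ℂ) * ∑ k ∈ Finset.range (p - 1), (A ^ k).trace * (A ^ (p - 2 - k)).trace :=
  laplacian_trace_pow_general n p H horth hspan A
end

section
/- For p ≥ 2 the second-order term in the expansion of tr((A+H)^p), namely tr Σ_{j=0}^{p−2} Σ_{k=0}^{p−2−j} A^j H A^k H A^{p−2−j−k}, when summed with H ranging over an orthonormal basis of the Hermitian matrices, equals (p/2) · Σ_{k=0}^{p−2} tr(A^k)·tr(A^{p−2−k}). -/
open Matrix

/-- The second-order term of the expansion of `tr((A+H)^p)`, summed over an orthonormal
basis `(H i)` of the Hermitian matrices (characterized by `Σ_i H i · B · H i = tr(B)·I`),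
equals `(p/2) Σ_{k=0}^{p-2} tr(A^k) tr(A^{p-2-k})`. -/
theorem sum_second_order_term (n p : ℕ) (hp : 2 ≤ p) {ι : Type*} [Fintype ι]
    (H : ι → Matrix (Fin n) (Fin n) ℂ)
    (hherm : ∀ i, (H i).IsHermitian)
    (hbasis : ∀ B : Matrix (Fin n) (Fin n) ℂ, B.IsHermitian →
      ∑ i, H i * B * H i = B.trace • (1 : Matrix (Fin n) (Fin n) ℂ))
    (A : Matrix (Fin n) (Fin n) ℂ) (hA : A.IsHermitian) :
    ∑ i, ∑ j ∈ Finset.range (p - 1), ∑ k ∈ Finset.range (p - 1 - j),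
        (A ^ j * H i * A ^ k * H i * A ^ (p - 2 - j - k)).trace
      = ((p : ℂ) / 2) * ∑ k ∈ Finset.range (p - 1), (A ^ k).trace * (A ^ (p - 2 - k)).trace := by
  set g : ℕ → ℂ := fun k => (A ^ k).trace * (A ^ (p - 2 - k)).trace with hg
  have key : ∀ j k : ℕ, j + k < p - 1 →
      ∑ i, (A ^ j * H i * A ^ k * H i * A ^ (p - 2 - j - k)).trace = g k := by
    intro j k hjk
    have e1 : ∑ i, A ^ j * H i * A ^ k * H i * A ^ (p - 2 - j - k)
        = (A ^ k).trace • (A ^ j * A ^ (p - 2 - j - k)) := by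
      calc ∑ i, A ^ j * H i * A ^ k * H i * A ^ (p - 2 - j - k)
          = A ^ j * (∑ i, H i * A ^ k * H i) * A ^ (p - 2 - j - k) := by
            rw [Finset.mul_sum, Finset.sum_mul]
            exact Finset.sum_congr rfl fun i _ => by noncomm_ring
        _ = A ^ j * ((A ^ k).trace • 1) * A ^ (p - 2 - j - k) := by
            rw [hbasis _ (hA.pow k)]
        _ = (A ^ k).trace • (A ^ j * A ^ (p - 2 - j - k)) := by
            rw [mul_smul_comm, smul_mul_assoc, mul_one]
    rw [← trace_sum, e1, trace_smul, ← pow_add, smul_eq_mul, hg]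
    congr 3
    omega
  have swap : ∑ i, ∑ j ∈ Finset.range (p - 1), ∑ k ∈ Finset.range (p - 1 - j),
        (A ^ j * H i * A ^ k * H i * A ^ (p - 2 - j - k)).trace
      = ∑ j ∈ Finset.range (p - 1), ∑ k ∈ Finset.range (p - 1 - j),
          ∑ i, (A ^ j * H i * A ^ k * H i * A ^ (p - 2 - j - k)).trace := by
    rw [Finset.sum_comm]
    exact Finset.sum_congr rfl fun j _ => Finset.sum_comm
  rw [swap]
  have step1 : ∑ j ∈ Finset.range (p - 1), ∑ k ∈ Finset.range (p - 1 - j),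
        ∑ i, (A ^ j * H i * A ^ k * H i * A ^ (p - 2 - j - k)).trace
      = ∑ j ∈ Finset.range (p - 1), ∑ k ∈ Finset.range (p - 1 - j), g k := by
    refine Finset.sum_congr rfl fun j hj => Finset.sum_congr rfl fun k hk => ?_
    simp only [Finset.mem_range] at hj hk
    exact key j k (by omega)
  rw [step1]
  have swap2 : ∑ j ∈ Finset.range (p - 1), ∑ k ∈ Finset.range (p - 1 - j), g k
      = ∑ k ∈ Finset.range (p - 1), ∑ j ∈ Finset.range (p - 1 - k), g k :=
    Finset.sum_comm' (fun j k => by simp only [Finset.mem_range]; omega)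
  rw [swap2]
  have step2 : ∑ k ∈ Finset.range (p - 1), ∑ j ∈ Finset.range (p - 1 - k), g k
      = ∑ k ∈ Finset.range (p - 1), ((p - 1 - k : ℕ) : ℂ) * g k := by
    refine Finset.sum_congr rfl fun k _ => ?_
    rw [Finset.sum_const, Finset.card_range, nsmul_eq_mul]
  rw [step2]
  have refl : ∑ k ∈ Finset.range (p - 1), ((p - 1 - k : ℕ) : ℂ) * g k
      = ∑ k ∈ Finset.range (p - 1), ((k + 1 : ℕ) : ℂ) * g k := by
    rw [← Finset.sum_range_reflect]
    refine Finset.sum_congr rfl fun k hk => ?_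
    simp only [Finset.mem_range] at hk
    have h1 : p - 1 - 1 - k = p - 2 - k := by omega
    have h2 : p - 1 - (p - 2 - k) = k + 1 := by omega
    have h3 : p - 2 - (p - 2 - k) = k := by omega
    rw [h1, h2]
    simp only [g]
    rw [h3, mul_comm ((A ^ (p - 2 - k)).trace)]
  have two : (2 : ℂ) * ∑ k ∈ Finset.range (p - 1), ((p - 1 - k : ℕ) : ℂ) * g k
      = (p : ℂ) * ∑ k ∈ Finset.range (p - 1), g k := by
    rw [two_mul]
    nth_rewrite 2 [refl]
    rw [← Finset.sum_add_distrib, Finset.mul_sum]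
    refine Finset.sum_congr rfl fun k hk => ?_
    simp only [Finset.mem_range] at hk
    rw [← add_mul, ← Nat.cast_add]
    congr 2
    omega
  have h2 : (2 : ℂ) ≠ 0 := two_ne_zero
  rw [div_mul_eq_mul_div, eq_div_iff h2]
  linear_combination two
end

section
/- Let A be an n×n GUE matrix (standard Gaussian on Hermitian matrices with Hilbert–Schmidt inner product). Then for every integer p ≥ 1: E[tr((n^{-1/2}A)^p)] = (1/n)·Σ_{k=0}^{p−2} E[tr((n^{-1/2}A)^k)·tr((n^{-1/2}A)^{p−2−k})], where the empty sum for p < 2 is 0 (so the expectation vanishes for p = 1). -/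
/-!
Write `A = ∑ i, g i • H i`. Expanding `A ^ (q + 1)` over words in the indices, `E tr(A ^ (q + 1))`
is a sum of Gaussian moments of monomials times traces of products of the `H i`. Gaussian
integration by parts (Stein's identity `E[g_i f(g)] = E[∂_i f(g)]`, here for monomials) pairs
the first letter of a word with each later occurrence of the same index; summing over that
index, the completeness relation `∑ i, H i * B * H i = tr B • 1` of an orthonormal basis of the
Hermitian matrices cuts the trace of the word into the product of the traces of the two pieces.
This is the recursion for `A` itself; rescaling by `n^{-1/2}` produces the factor `1 / n`.
-/

open Matrix MeasureTheory ProbabilityTheory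

/-- `A` is an `n × n` GUE matrix: a random Hermitian matrix distributed according to the
standard Gaussian measure on `M_n^{sa}(ℂ)` with inner product `⟨A,B⟩ = tr(AB)`,
i.e. `A = Σ_i g_i • H_i` for i.i.d. standard Gaussians `g_i` and an orthonormal basis
`(H_i)` of the real vector space of Hermitian matrices. -/
def IsGUE {n : ℕ} {Ω : Type*} [MeasureSpace Ω]
    (A : Ω → Matrix (Fin n) (Fin n) ℂ) : Prop :=
  ∃ (ι : Type) (_ : Fintype ι) (_ : DecidableEq ι) (g : ι → Ω → ℝ) (H : ι → Matrix (Fin n) (Fin n) ℂ),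
    (∀ i, (H i).IsHermitian) ∧
    (∀ i j, (H i * H j).trace = if i = j then (1 : ℂ) else 0) ∧
    (∀ M : Matrix (Fin n) (Fin n) ℂ, M.IsHermitian →
      M ∈ Submodule.span ℝ (Set.range H)) ∧
    (∀ i, Measurable (g i)) ∧
    iIndepFun g ℙ ∧
    (∀ i, Measure.map (g i) ℙ = gaussianReal 0 1) ∧
    (∀ ω, A ω = ∑ i, g i ω • H i)

noncomputable def gaussianMoment (m : ℕ) : ℝ := ∫ x, x ^ m ∂gaussianReal 0 1

section GaussianMoment

lemma integrable_pow_gaussianReal (m : ℕ) :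
    Integrable (fun x : ℝ => x ^ m) (gaussianReal 0 1) :=
  (memLp_id_gaussianReal (μ := 0) (v := 1) m).integrable_norm_pow'.mono' (by fun_prop)
    (ae_of_all _ fun x => by simp [norm_pow])

lemma hasDerivAt_gaussianPDFReal_zero_one (x : ℝ) :
    HasDerivAt (gaussianPDFReal 0 1) (-(x * gaussianPDFReal 0 1 x)) x := by
  have hexp : HasDerivAt (fun y : ℝ => -(y ^ 2 / 2)) (-x) x :=
    ((hasDerivAt_pow 2 x).div_const 2).fun_neg.congr_deriv (by ring)
  have hpdf : gaussianPDFReal 0 1 = fun y => (√(2 * Real.pi))⁻¹ * Real.exp (-(y ^ 2 / 2)) := by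
    ext y; simp [gaussianPDFReal, neg_div]
  rw [hpdf]
  exact (hexp.exp.const_mul _).congr_deriv (by ring)

lemma integrable_pow_mul_gaussianPDFReal (k : ℕ) :
    Integrable fun x : ℝ => x ^ k * gaussianPDFReal 0 1 x := by
  have h := integrable_pow_gaussianReal k
  rw [gaussianReal_of_var_ne_zero 0 one_ne_zero,
    integrable_withDensity_iff_integrable_smul' (measurable_gaussianPDF 0 1)
      (ae_of_all _ fun _ => gaussianPDF_lt_top)] at h
  refine h.congr (ae_of_all _ fun x => ?_)
  simp [toReal_gaussianPDF, mul_comm]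

lemma gaussianMoment_eq_integral (m : ℕ) :
    gaussianMoment m = ∫ x, x ^ m * gaussianPDFReal 0 1 x := by
  rw [gaussianMoment, integral_gaussianReal_eq_integral_smul one_ne_zero]
  simp [mul_comm]

/-- Integration by parts of `x ^ (m + 1)` against the density `φ`, using `φ' = -x φ`. -/
lemma gaussianMoment_add_two (m : ℕ) :
    gaussianMoment (m + 2) = (m + 1) * gaussianMoment m := by
  have ibp := integral_mul_deriv_eq_deriv_mul_of_integrable
    (fun x _ => hasDerivAt_pow (m + 1) x) (fun x _ => hasDerivAt_gaussianPDFReal_zero_one x)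
    ((integrable_pow_mul_gaussianPDFReal (m + 2)).neg.congr (ae_of_all _ fun x => by
      simp only [Pi.neg_apply, Pi.mul_apply]; ring))
    (((integrable_pow_mul_gaussianPDFReal m).const_mul (m + 1 : ℕ)).congr
      (ae_of_all _ fun x => by simp only [Pi.mul_apply, Nat.add_sub_cancel]; ring))
    (integrable_pow_mul_gaussianPDFReal (m + 1))
  simp only [mul_neg, integral_neg, neg_inj, Nat.add_sub_cancel] at ibp
  calc gaussianMoment (m + 2) = ∫ x, x ^ (m + 1) * (x * gaussianPDFReal 0 1 x) := by
        simp only [gaussianMoment_eq_integral, ← mul_assoc, ← pow_succ]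
    _ = ∫ x, (m + 1 : ℕ) * x ^ m * gaussianPDFReal 0 1 x := ibp
    _ = (m + 1) * gaussianMoment m := by
        simp only [mul_assoc, integral_const_mul, gaussianMoment_eq_integral]; push_cast; rfl

lemma gaussianMoment_succ (a : ℕ) : gaussianMoment (a + 1) = a * gaussianMoment (a - 1) := by
  rcases a with _ | a
  · simp [gaussianMoment]
  · simpa using gaussianMoment_add_two a

end GaussianMoment

section StandardGaussianVector

variable {ι : Type*} [Fintype ι] [DecidableEq ι]

lemma Multiset.prod_map_eq_prod_pow_count {M : Type*} [CommMonoid M] (s : Multiset ι)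
    (x : ι → M) : (s.map x).prod = ∏ i, x i ^ s.count i := by
  rw [Finset.prod_multiset_map_count]
  exact Finset.prod_subset (Finset.subset_univ _) fun i _ hi => by
    rw [Multiset.count_eq_zero_of_notMem (by simpa using hi), pow_zero]

/-- Stein's identity `E[x_i f(x)] = E[∂_i f(x)]` for the monomial `f = ∏_{j ∈ s} x_j`. -/
lemma prod_gaussianMoment_count_cons (i : ι) (s : Multiset ι) :
    ∏ k, gaussianMoment ((i ::ₘ s).count k)
      = s.count i * ∏ k, gaussianMoment ((s.erase i).count k) := by
  simp only [← Finset.mul_prod_erase Finset.univ _ (Finset.mem_univ i), Multiset.count_cons_self,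
    gaussianMoment_succ, Multiset.count_erase_self, ← mul_assoc]
  congr 1
  refine Finset.prod_congr rfl fun k hk => ?_
  rw [Multiset.count_cons_of_ne (Finset.ne_of_mem_erase hk),
    Multiset.count_erase_of_ne (Finset.ne_of_mem_erase hk)]

lemma integrable_multiset_prod_map_pi_gaussianReal (s : Multiset ι) :
    Integrable (fun x : ι → ℝ => (s.map x).prod) (Measure.pi fun _ => gaussianReal 0 1) := by
  simp only [Multiset.prod_map_eq_prod_pow_count]
  exact Integrable.fintype_prod fun i => integrable_pow_gaussianReal (s.count i)

variable {Ω : Type*} [MeasurableSpace Ω] {P : Measure Ω} {G : Ω → ι → ℝ}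
  (hG : HasLaw G (Measure.pi fun _ => gaussianReal 0 1) P)
include hG

lemma integrable_multiset_prod_map_of_hasLaw (s : Multiset ι) :
    Integrable (fun ω => (s.map (G ω)).prod) P := by
  have h := integrable_multiset_prod_map_pi_gaussianReal s
  rw [← hG.map_eq] at h
  exact (integrable_map_measure h.aestronglyMeasurable hG.aemeasurable).1 h

lemma integral_multiset_prod_map_of_hasLaw (s : Multiset ι) :
    ∫ ω, (s.map (G ω)).prod ∂P = ∏ i, gaussianMoment (s.count i) := by
  calc ∫ ω, (s.map (G ω)).prod ∂P
      = ∫ x : ι → ℝ, (s.map x).prod ∂(Measure.pi fun _ => gaussianReal 0 1) :=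
        hG.integral_comp (integrable_multiset_prod_map_pi_gaussianReal s).aestronglyMeasurable
    _ = ∏ i, gaussianMoment (s.count i) := by
        simp only [Multiset.prod_map_eq_prod_pow_count]
        exact integral_fintype_prod_eq_prod fun i x => x ^ s.count i

end StandardGaussianVector

section Words

variable {ι R : Type*} [Semiring R] (H : ι → R)

def wordProd {m : ℕ} (w : Fin m → ι) : R := (List.ofFn fun j => H (w j)).prod

@[simp]
lemma wordProd_cons {m : ℕ} (i : ι) (w : Fin m → ι) :
    wordProd H (Fin.cons i w) = H i * wordProd H w := by
  simp [wordProd, List.ofFn_succ]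

lemma wordProd_append {a b : ℕ} (u : Fin a → ι) (v : Fin b → ι) :
    wordProd H (Fin.append u v) = wordProd H u * wordProd H v := by
  simp only [wordProd, ← List.prod_append, ← List.ofFn_fin_append]
  congr 2
  ext j
  refine Fin.addCases (fun j => ?_) (fun j => ?_) j <;> simp

lemma sum_smul_pow_eq_sum_wordProd [Fintype ι] {S : Type*} [CommSemiring S] [Algebra S R]
    (x : ι → S) (m : ℕ) :
    (∑ i, x i • H i) ^ m = ∑ w : Fin m → ι, (∏ j, x (w j)) • wordProd H w := by
  induction m with
  | zero => simp [wordProd]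
  | succ m ih =>
    rw [pow_succ', ih, Finset.sum_mul_sum, ← (Fin.consEquiv fun _ => ι).sum_comp,
      Fintype.sum_prod_type]
    refine Finset.sum_congr rfl fun i _ => Finset.sum_congr rfl fun w _ => ?_
    rw [smul_mul_smul_comm]
    simp [Fin.consEquiv, Fin.prod_univ_succ, mul_smul]

lemma Fintype.sum_fin_append_cons [Fintype ι] {M : Type*} [AddCommMonoid M] {a b : ℕ}
    (F : (Fin (a + (b + 1)) → ι) → M) :
    ∑ t, F t
      = ∑ u : Fin a → ι, ∑ i, ∑ v : Fin b → ι, F (Fin.append u (Fin.cons i v)) := by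
  rw [← (Fin.appendEquiv a (b + 1)).sum_comp, Fintype.sum_prod_type]
  refine Finset.sum_congr rfl fun u _ => ?_
  rw [← (Fin.consEquiv fun _ => ι).sum_comp, Fintype.sum_prod_type]
  rfl

lemma Multiset.count_coe_ofFn [DecidableEq ι] {m : ℕ} (t : Fin m → ι) (i : ι) :
    (List.ofFn t : Multiset ι).count i = ∑ j, if t j = i then 1 else 0 := by
  rw [← Fin.univ_val_map, Multiset.count_map, ← Finset.filter_val, Finset.card_val,
    Finset.card_filter]
  simp only [eq_comm]

variable [Fintype ι] [DecidableEq ι] {K : Type*} [CommSemiring K] (τ : R → K)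
  {M : Multiset ι → K}

lemma sum_moment_mul_wordProd_succ_eq_sum_erase
    (hM : ∀ i s, M (i ::ₘ s) = s.count i * M (s.erase i)) (q : ℕ) :
    ∑ f : Fin (q + 1) → ι, M (List.ofFn f) * τ (wordProd H f)
      = ∑ j : Fin q, ∑ t : Fin q → ι,
          M ((List.ofFn t : Multiset ι).erase (t j)) * τ (H (t j) * wordProd H t) := by
  rw [← (Fin.consEquiv fun _ => ι).sum_comp, Fintype.sum_prod_type, Finset.sum_comm]
  conv_rhs => rw [Finset.sum_comm]
  refine Finset.sum_congr rfl fun t _ => ?_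
  calc ∑ i, M (List.ofFn (Fin.cons i t : Fin (q + 1) → ι)) * τ (wordProd H (Fin.cons i t))
      = ∑ i, ∑ j, if t j = i then
          M ((List.ofFn t : Multiset ι).erase i) * τ (H i * wordProd H t) else 0 := by
        simp only [List.ofFn_cons, ← Multiset.cons_coe, hM, Multiset.count_coe_ofFn,
          wordProd_cons]
        push_cast
        simp only [Finset.sum_mul, ite_mul, one_mul, zero_mul]
    _ = _ := by
        rw [Finset.sum_comm]
        simp only [Finset.sum_ite_eq, Finset.mem_univ, if_true]

lemma sum_moment_mul_wordProd_erase_at {a b : ℕ}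
    (hτ : ∀ B C, ∑ i, τ (H i * B * H i * C) = τ B * τ C) :
    ∑ t : Fin (a + (b + 1)) → ι, M ((List.ofFn t : Multiset ι).erase (t (Fin.natAdd a 0)))
        * τ (H (t (Fin.natAdd a 0)) * wordProd H t)
      = ∑ u : Fin a → ι, ∑ v : Fin b → ι,
          M (List.ofFn u + List.ofFn v) * (τ (wordProd H u) * τ (wordProd H v)) := by
  rw [Fintype.sum_fin_append_cons]
  refine Finset.sum_congr rfl fun u _ => ?_
  rw [Finset.sum_comm]
  refine Finset.sum_congr rfl fun v _ => ?_
  have hcontent : ∀ i, (List.ofFn (Fin.append u (Fin.cons i v)) : Multiset ι).erase i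
      = List.ofFn u + List.ofFn v := fun i => by
    rw [List.ofFn_fin_append, List.ofFn_cons, ← Multiset.coe_add, ← Multiset.cons_coe,
      Multiset.add_cons, Multiset.erase_cons_head]
  simp only [Fin.append_right, Fin.cons_zero, hcontent, wordProd_append, wordProd_cons,
    ← Finset.mul_sum, ← mul_assoc]
  rw [hτ, mul_assoc]

/-- Wick's recursion: the first letter of a word is paired with each later occurrence of its
index (`hM`), and summing over that index cuts the word into two traces (`hτ`). -/
theorem sum_moment_mul_wordProd_succ
    (hM : ∀ i s, M (i ::ₘ s) = s.count i * M (s.erase i))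
    (hτ : ∀ B C, ∑ i, τ (H i * B * H i * C) = τ B * τ C) (q : ℕ) :
    ∑ f : Fin (q + 1) → ι, M (List.ofFn f) * τ (wordProd H f)
      = ∑ k ∈ Finset.range q, ∑ u : Fin k → ι, ∑ v : Fin (q - 1 - k) → ι,
          M (List.ofFn u + List.ofFn v) * (τ (wordProd H u) * τ (wordProd H v)) := by
  rw [sum_moment_mul_wordProd_succ_eq_sum_erase H τ hM, ← Fin.sum_univ_eq_sum_range
    (fun k => ∑ u : Fin k → ι, ∑ v : Fin (q - 1 - k) → ι,
      M (List.ofFn u + List.ofFn v) * (τ (wordProd H u) * τ (wordProd H v)))]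
  refine Finset.sum_congr rfl fun ⟨a, ha⟩ _ => ?_
  obtain ⟨b, rfl⟩ : ∃ b, q = a + (b + 1) := ⟨q - 1 - a, by omega⟩
  rw [show a + (b + 1) - 1 - a = b by omega]
  exact sum_moment_mul_wordProd_erase_at H τ hτ

end Words

section Completeness

open scoped ComplexStarModule

variable {n : ℕ} {ι : Type*} [Fintype ι] [DecidableEq ι]
  {H : ι → Matrix (Fin n) (Fin n) ℂ}
  (horth : ∀ i j, (H i * H j).trace = if i = j then (1 : ℂ) else 0)
  (hspan : ∀ M : Matrix (Fin n) (Fin n) ℂ, M.IsHermitian →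
    M ∈ Submodule.span ℝ (Set.range H))
include horth hspan

lemma sum_trace_mul_smul_of_isHermitian {X : Matrix (Fin n) (Fin n) ℂ} (hX : X.IsHermitian) :
    ∑ i, (H i * X).trace • H i = X := by
  obtain ⟨c, rfl⟩ := (Submodule.mem_span_range_iff_exists_fun ℝ).1 (hspan X hX)
  refine Finset.sum_congr rfl fun i _ => ?_
  simp [Matrix.mul_sum, horth, Complex.coe_smul]

lemma sum_trace_mul_smul (X : Matrix (Fin n) (Fin n) ℂ) :
    ∑ i, (H i * X).trace • H i = X := by
  have hre := sum_trace_mul_smul_of_isHermitian horth hspan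
    (isHermitian_iff_isSelfAdjoint.2 (ℜ X).prop)
  have him := sum_trace_mul_smul_of_isHermitian horth hspan
    (isHermitian_iff_isSelfAdjoint.2 (ℑ X).prop)
  calc ∑ i, (H i * X).trace • H i
      = ∑ i, (H i * ℜ X).trace • H i + Complex.I • ∑ i, (H i * ℑ X).trace • H i := by
        conv_lhs => rw [← realPart_add_I_smul_imaginaryPart X]
        simp only [Matrix.mul_add, Matrix.mul_smul, trace_add, trace_smul, add_smul, smul_eq_mul,
          mul_smul, Finset.sum_add_distrib, Finset.smul_sum]
    _ = X := by rw [hre, him, realPart_add_I_smul_imaginaryPart]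

lemma sum_apply_mul_apply (a b c d : Fin n) :
    ∑ i, H i a b * H i c d = if b = c ∧ a = d then 1 else 0 := by
  have h := congrFun (congrFun (sum_trace_mul_smul horth hspan (single b a 1)) c) d
  simpa [trace_mul_single, Matrix.sum_apply, single_apply] using h

lemma sum_mul_mul_self (B : Matrix (Fin n) (Fin n) ℂ) :
    ∑ i, H i * B * H i = B.trace • (1 : Matrix (Fin n) (Fin n) ℂ) := by
  ext a d
  calc (∑ i, H i * B * H i) a d = ∑ c, ∑ b, B b c * ∑ i, H i a b * H i c d := by
        simp only [Matrix.sum_apply, mul_apply, Finset.sum_mul, Finset.mul_sum]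
        rw [Finset.sum_comm]
        refine Finset.sum_congr rfl fun c _ => ?_
        rw [Finset.sum_comm]
        refine Finset.sum_congr rfl fun b _ => Finset.sum_congr rfl fun i _ => by ring
    _ = (B.trace • (1 : Matrix (Fin n) (Fin n) ℂ)) a d := by
        simp [sum_apply_mul_apply horth hspan, one_apply, trace, ite_and]

lemma sum_trace_mul_mul_mul_s14 (B C : Matrix (Fin n) (Fin n) ℂ) :
    ∑ i, (H i * B * H i * C).trace = B.trace * C.trace := by
  rw [← trace_sum, ← Finset.sum_mul, sum_mul_mul_self horth hspan, smul_mul, Matrix.one_mul,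
    trace_smul, smul_eq_mul]

end Completeness

section GaussianRandomMatrix

variable {ι : Type*} [Fintype ι] {n : ℕ} (H : ι → Matrix (Fin n) (Fin n) ℂ)

lemma trace_sum_smul_pow (x : ι → ℝ) (m : ℕ) :
    ((∑ i, x i • H i) ^ m).trace
      = ∑ w : Fin m → ι,
          (((List.ofFn w : Multiset ι).map x).prod : ℂ) * (wordProd H w).trace := by
  rw [sum_smul_pow_eq_sum_wordProd, trace_sum]
  refine Finset.sum_congr rfl fun w _ => ?_
  rw [trace_smul, Complex.real_smul]
  simp [List.prod_ofFn]

variable [DecidableEq ι] {Ω : Type*} [MeasurableSpace Ω] {P : Measure Ω} {G : Ω → ι → ℝ}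
  (hG : HasLaw G (Measure.pi fun _ => gaussianReal 0 1) P)
include hG

lemma integrable_multiset_prod_map_mul_of_hasLaw (s : Multiset ι) (z : ℂ) :
    Integrable (fun ω => ((s.map (G ω)).prod : ℂ) * z) P :=
  (integrable_multiset_prod_map_of_hasLaw hG s).ofReal.mul_const z

lemma integral_multiset_prod_map_mul_of_hasLaw (s : Multiset ι) (z : ℂ) :
    ∫ ω, ((s.map (G ω)).prod : ℂ) * z ∂P
      = (∏ i, gaussianMoment (s.count i) : ℝ) * z := by
  rw [integral_mul_const, integral_complex_ofReal, integral_multiset_prod_map_of_hasLaw hG]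

lemma integral_trace_pow_of_hasLaw (m : ℕ) :
    ∫ ω, ((∑ i, G ω i • H i) ^ m).trace ∂P
      = ∑ w : Fin m → ι, (∏ i, gaussianMoment ((List.ofFn w : Multiset ι).count i) : ℝ)
          * (wordProd H w).trace := by
  simp only [trace_sum_smul_pow]
  rw [integral_finsetSum _ fun w _ => integrable_multiset_prod_map_mul_of_hasLaw hG _ _]
  exact Finset.sum_congr rfl fun w _ => integral_multiset_prod_map_mul_of_hasLaw hG _ _

lemma integral_trace_pow_mul_trace_pow_of_hasLaw (k l : ℕ) :
    ∫ ω, ((∑ i, G ω i • H i) ^ k).trace * ((∑ i, G ω i • H i) ^ l).trace ∂P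
      = ∑ u : Fin k → ι, ∑ v : Fin l → ι,
          (∏ i, gaussianMoment ((List.ofFn u + List.ofFn v : Multiset ι).count i) : ℝ)
            * ((wordProd H u).trace * (wordProd H v).trace) := by
  have hmul : ∀ ω, ((∑ i, G ω i • H i) ^ k).trace * ((∑ i, G ω i • H i) ^ l).trace
      = ∑ u : Fin k → ι, ∑ v : Fin l → ι,
          (((List.ofFn u + List.ofFn v : Multiset ι).map (G ω)).prod : ℂ)
            * ((wordProd H u).trace * (wordProd H v).trace) := fun ω => by
    simp only [trace_sum_smul_pow, Finset.sum_mul_sum, Multiset.map_add, Multiset.prod_add]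
    push_cast
    exact Finset.sum_congr rfl fun u _ => Finset.sum_congr rfl fun v _ => by ring
  simp only [hmul]
  rw [integral_finsetSum _ fun u _ => integrable_finsetSum _ fun v _ =>
    integrable_multiset_prod_map_mul_of_hasLaw hG _ _]
  refine Finset.sum_congr rfl fun u _ => ?_
  rw [integral_finsetSum _ fun v _ => integrable_multiset_prod_map_mul_of_hasLaw hG _ _]
  exact Finset.sum_congr rfl fun v _ => integral_multiset_prod_map_mul_of_hasLaw hG _ _

theorem integral_trace_pow_succ_of_hasLaw
    (horth : ∀ i j, (H i * H j).trace = if i = j then (1 : ℂ) else 0)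
    (hspan : ∀ M : Matrix (Fin n) (Fin n) ℂ, M.IsHermitian →
      M ∈ Submodule.span ℝ (Set.range H))
    (q : ℕ) :
    ∫ ω, ((∑ i, G ω i • H i) ^ (q + 1)).trace ∂P
      = ∑ k ∈ Finset.range q, ∫ ω, ((∑ i, G ω i • H i) ^ k).trace
          * ((∑ i, G ω i • H i) ^ (q - 1 - k)).trace ∂P := by
  rw [integral_trace_pow_of_hasLaw H hG, sum_moment_mul_wordProd_succ H trace
    (M := fun s => ((∏ i, gaussianMoment (s.count i) : ℝ) : ℂ))
    (fun i s => by simp [prod_gaussianMoment_count_cons]) (sum_trace_mul_mul_mul_s14 horth hspan)]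
  simp only [integral_trace_pow_mul_trace_pow_of_hasLaw H hG]

end GaussianRandomMatrix

theorem gue_trace_moment_recursion_general (n : ℕ) {Ω : Type*} [MeasureSpace Ω]
    (A : Ω → Matrix (Fin n) (Fin n) ℂ)
    (hA : IsGUE A) (p : ℕ) (hp : 1 ≤ p) :
    ∫ ω, (((Real.sqrt n)⁻¹ • A ω) ^ p).trace
      = (1 / (n : ℂ)) * ∑ k ∈ Finset.range (p - 1),
          ∫ ω, (((Real.sqrt n)⁻¹ • A ω) ^ k).trace *
            (((Real.sqrt n)⁻¹ • A ω) ^ (p - 2 - k)).trace := by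
  obtain ⟨q, rfl⟩ : ∃ q, p = q + 1 := ⟨p - 1, by omega⟩
  obtain ⟨ι, _, _, g, H, -, horth, hspan, hg, hind, hlaw, hA⟩ := hA
  have hG : HasLaw (fun ω i => g i ω) (Measure.pi fun _ => gaussianReal 0 1) :=
    hind.hasLaw_pi fun i => ⟨(hg i).aemeasurable, hlaw i⟩
  set c : ℝ := (Real.sqrt n)⁻¹
  have hc : (c : ℂ) ^ 2 = 1 / n := by
    have : c ^ 2 = 1 / n := by rw [inv_pow, Real.sq_sqrt n.cast_nonneg, one_div]
    rw [← Complex.ofReal_pow, this]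
    push_cast
    rfl
  have hscale : ∀ m ω,
      ((c • A ω) ^ m).trace = (c : ℂ) ^ m * ((∑ i, g i ω • H i) ^ m).trace := by
    intro m ω
    rw [hA, smul_pow, trace_smul, Complex.real_smul, Complex.ofReal_pow]
  calc ∫ ω, ((c • A ω) ^ (q + 1)).trace
      = ∑ k ∈ Finset.range q, (c : ℂ) ^ (q + 1) * ∫ ω, ((∑ i, g i ω • H i) ^ k).trace
          * ((∑ i, g i ω • H i) ^ (q - 1 - k)).trace := by
        simp only [hscale, integral_const_mul, ← Finset.mul_sum]
        congr 1
        exact integral_trace_pow_succ_of_hasLaw H hG horth hspan q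
    _ = _ := by
        rw [Finset.mul_sum]
        refine Finset.sum_congr rfl fun k hk => ?_
        have hqk : q + 1 = 2 + k + (q - 1 - k) := by have := Finset.mem_range.1 hk; omega
        simp only [hscale, ← integral_const_mul, show q + 1 - 2 - k = q - 1 - k by omega]
        congr 1
        ext ω
        rw [hqk, pow_add, pow_add, hc]
        ring

/-- Recursion for the moments of a GUE matrix: for `p ≥ 1`,
`E[tr((n^{-1/2}A)^p)] = (1/n) Σ_{k=0}^{p-2} E[tr((n^{-1/2}A)^k) tr((n^{-1/2}A)^{p-2-k})]`,
where the empty sum for `p < 2` is `0`. -/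
theorem gue_trace_moment_recursion (n : ℕ) (hn : 0 < n) {Ω : Type*} [MeasureSpace Ω]
    [IsProbabilityMeasure (ℙ : Measure Ω)] (A : Ω → Matrix (Fin n) (Fin n) ℂ)
    (hA : IsGUE A) (p : ℕ) (hp : 1 ≤ p) :
    ∫ ω, (((Real.sqrt n)⁻¹ • A ω) ^ p).trace
      = (1 / (n : ℂ)) * ∑ k ∈ Finset.range (p - 1),
          ∫ ω, (((Real.sqrt n)⁻¹ • A ω) ^ k).trace *
            (((Real.sqrt n)⁻¹ • A ω) ^ (p - 2 - k)).trace :=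
  gue_trace_moment_recursion_general n A hA p hp
end

section
/- Let Λ be a d×d real lower-triangular matrix with diagonal entries 1, 2, …, d, and suppose there exist vectors v¹, …, v^d in ℝ^d with Λᵀ v^p = p·v^p for each p, such that Σ_{k=1}^{d} k²·v^p_k·v^q_k = 0 whenever p ≠ q, and each v^p ≠ 0. Then Λ is diagonal, i.e., Λ = diag(1, 2, …, d), and each v^p is a scalar multiple of the p-th standard basis vector. -/
open Matrix

/-- Let `Λ` be a `d × d` real lower-triangular matrix with diagonal entries `1, 2, …, d`,
and suppose there are nonzero vectors `v¹, …, v^d` with `Λᵀ v^p = p v^p` which are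
pairwise orthogonal with respect to the inner product `⟨x,y⟩ = Σ_k k² x_k y_k`.
Then `Λ = diag(1, 2, …, d)` and each `v^p` is a scalar multiple of the `p`-th standard
basis vector. -/
theorem lower_triangular_diag (d : ℕ) (Λ : Matrix (Fin d) (Fin d) ℝ)
    (hlow : ∀ i j : Fin d, i < j → Λ i j = 0)
    (hdiag : ∀ i : Fin d, Λ i i = (i : ℕ) + 1)
    (v : Fin d → Fin d → ℝ)
    (hv : ∀ p : Fin d, Λᵀ.mulVec (v p) = (((p : ℕ) : ℝ) + 1) • v p)
    (hvne : ∀ p : Fin d, v p ≠ 0)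
    (horth : ∀ p q : Fin d, p ≠ q →
      ∑ k : Fin d, (((k : ℕ) : ℝ) + 1) ^ 2 * v p k * v q k = 0) :
    Λ = Matrix.diagonal (fun i : Fin d => ((i : ℕ) : ℝ) + 1) ∧
      ∀ p : Fin d, ∃ c : ℝ, v p = c • (Pi.single p 1 : Fin d → ℝ) := by
  -- Step 1: entries of v p above index p vanish
  have hsupp1 : ∀ p i : Fin d, p < i → v p i = 0 := by
    have key : ∀ n : ℕ, ∀ p i : Fin d, d - (i : ℕ) ≤ n → p < i → v p i = 0 := by
      intro n
      induction n with
      | zero => intro p i hi _; exfalso; have := i.isLt; omega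
      | succ n ih =>
        intro p i hi hpi
        have heq := congrFun (hv p) i
        simp only [Matrix.mulVec, dotProduct, Matrix.transpose_apply,
          Pi.smul_apply, smul_eq_mul] at heq
        have hsum : ∑ j : Fin d, Λ j i * v p j = Λ i i * v p i := by
          apply Finset.sum_eq_single
          · intro j _ hj
            rcases lt_or_gt_of_ne hj with h | h
            · rw [hlow j i h, zero_mul]
            · have hvj : v p j = 0 := by
                apply ih p j _ (lt_trans hpi h)
                have : (i : ℕ) < (j : ℕ) := h
                omega
              rw [hvj, mul_zero]
          · intro h; exact absurd (Finset.mem_univ i) h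
        rw [hsum, hdiag i] at heq
        have hip : (i : ℕ) ≠ (p : ℕ) := fun h => absurd (Fin.ext h) hpi.ne'
        have : ((i : ℕ) : ℝ) + 1 ≠ ((p : ℕ) : ℝ) + 1 := by
          intro h; apply hip; exact_mod_cast add_right_cancel h
        by_contra hne
        exact this (mul_right_cancel₀ hne heq)
    intro p i hpi
    exact key d p i (by omega) hpi
  -- Step 2: v p is supported on {p}
  have hsupp : ∀ p k : Fin d, k ≠ p → v p k = 0 := by
    have key : ∀ n : ℕ, ∀ p : Fin d, (p : ℕ) < n → ∀ k, k ≠ p → v p k = 0 := by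
      intro n
      induction n with
      | zero => intro p hp; omega
      | succ n ihn =>
        intro p hp k hk
        have ih : ∀ q : Fin d, q < p → ∀ j, j ≠ q → v q j = 0 := by
          intro q hq j hj
          exact ihn q (by have : (q:ℕ) < (p:ℕ) := hq; omega) j hj
        rcases lt_or_gt_of_ne hk with hkp | hpk
        · -- k < p : use orthogonality with v k
          have hkk : v k k ≠ 0 := by
            intro h0
            apply hvne k
            funext j
            by_cases hj : j = k
            · rw [hj]; exact h0
            · exact ih k hkp j hj
          have ho := horth p k (Ne.symm hk)
          have hsum : ∑ j : Fin d, (((j : ℕ) : ℝ) + 1) ^ 2 * v p j * v k j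
              = (((k : ℕ) : ℝ) + 1) ^ 2 * v p k * v k k := by
            apply Finset.sum_eq_single
            · intro j _ hj
              rw [ih k hkp j hj, mul_zero]
            · intro h; exact absurd (Finset.mem_univ k) h
          rw [hsum] at ho
          have hk2 : (((k : ℕ) : ℝ) + 1) ^ 2 ≠ 0 := by positivity
          have := mul_eq_zero.mp ho
          rcases this with h | h
          · rcases mul_eq_zero.mp h with h' | h'
            · exact absurd h' hk2
            · exact h'
          · exact absurd h hkk
        · exact hsupp1 p k hpk
    intro p k hk
    exact key ((p:ℕ)+1) p (by omega) k hk
  have hvpp : ∀ p : Fin d, v p p ≠ 0 := by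
    intro p h0
    apply hvne p
    funext j
    by_cases hj : j = p
    · rw [hj]; exact h0
    · exact hsupp p j hj
  constructor
  · ext i j
    by_cases hij : i = j
    · subst hij; rw [Matrix.diagonal_apply_eq, hdiag]
    · rw [Matrix.diagonal_apply_ne _ hij]
      rcases lt_or_gt_of_ne hij with h | h
      · exact hlow i j h
      · -- j < i, use eigen equation for v i at component j
        have heq := congrFun (hv i) j
        simp only [Matrix.mulVec, dotProduct, Matrix.transpose_apply,
          Pi.smul_apply, smul_eq_mul] at heq
        have hsum : ∑ m : Fin d, Λ m j * v i m = Λ i j * v i i := by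
          apply Finset.sum_eq_single
          · intro m _ hm
            rw [hsupp i m hm, mul_zero]
          · intro hmem; exact absurd (Finset.mem_univ i) hmem
        rw [hsum, hsupp i j (Ne.symm hij), mul_zero] at heq
        exact (mul_eq_zero.mp heq).resolve_right (hvpp i)
  · intro p
    refine ⟨v p p, ?_⟩
    funext k
    by_cases hk : k = p
    · subst hk; simp
    · rw [hsupp p k hk]; simp [Pi.single_apply, hk]
end
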